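/- arXiv:math/0609564 — 4 statements merged into one kernel-verified Lean document; each statement's English description precedes it below -/
import Mathlib

section
/- Let λ = (λ₁,…,λ_r) be a partition with conjugate λ* = (λ₁*,…,λ*_{λ₁}). Define α_Y to be the multiset (λ₁+λ₁, λ₁+λ₂, …, λ₁+λ_r, λ₁, λ₂, …, λ_r) and β_Y to be the multiset (λ₁*+λ₁*, λ₁*+λ₂*, …, λ₁*+λ*_{λ₁}, λ₁*, …, λ*_{λ₁}), each reordered to be non-increasing. Then the conjugate of α_Y (as a partition) equals β_Y. -/
/-- The `k`-th entry (1-indexed) of the conjugate of the partition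
`(lam 1, …, lam r)`. -/
def conjCount (r : ℕ) (lam : ℕ → ℕ) (k : ℕ) : ℕ :=
  ((Finset.Icc 1 r).filter fun j => k ≤ lam j).card

/-- with `α_Y = (λ₁+λ₁,…,λ₁+λ_r,λ₁,…,λ_r)` and
`β_Y = (λ₁*+λ₁*,…,λ₁*+λ*_{λ₁},λ₁*,…,λ*_{λ₁})` (both non-increasing as listed),
the conjugate of `α_Y` equals `β_Y`.  Here `α_Y` is realized as the
`ℕ`-indexed tuple `i ↦ λ₁ + λ_i` for `1 ≤ i ≤ r` and `i ↦ λ_{i-r}` for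
`r < i ≤ 2r`, and the `k`-th entry of `β_Y` (for `1 ≤ k ≤ 2λ₁`) is
`λ₁* + λ*_k` if `k ≤ λ₁` and `λ*_{k-λ₁}` otherwise. -/
theorem conjugate_alphaY_eq_betaY (r : ℕ) (hr : 1 ≤ r) (lam : ℕ → ℕ)
    (hmono : ∀ i j, 1 ≤ i → i ≤ j → j ≤ r → lam j ≤ lam i)
    (hpos : ∀ i, 1 ≤ i → i ≤ r → 1 ≤ lam i) :
    ∀ k, 1 ≤ k → k ≤ 2 * lam 1 →
      conjCount (2 * r) (fun i => if i ≤ r then lam 1 + lam i else lam (i - r)) k =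
        if k ≤ lam 1 then conjCount r lam 1 + conjCount r lam k
        else conjCount r lam (k - lam 1) := by
  intro k hk1 hk2
  unfold conjCount
  have hsplit : Finset.Icc 1 (2 * r) = Finset.Icc 1 r ∪ Finset.Icc (r + 1) (2 * r) := by
    ext i; simp [Finset.mem_Icc, Finset.mem_union]; omega
  have hdisj : Disjoint (Finset.Icc 1 r) (Finset.Icc (r + 1) (2 * r)) := by
    rw [Finset.disjoint_left]; intro a ha hb
    simp [Finset.mem_Icc] at ha hb; omega
  rw [hsplit, Finset.filter_union,
    Finset.card_union_of_disjoint (Finset.disjoint_filter_filter hdisj)]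
  have hA : ((Finset.Icc 1 r).filter fun i =>
      k ≤ if i ≤ r then lam 1 + lam i else lam (i - r)) =
      (Finset.Icc 1 r).filter fun i => k ≤ lam 1 + lam i := by
    apply Finset.filter_congr
    intro i hi
    simp [Finset.mem_Icc] at hi
    simp [hi.2]
  have hB : ((Finset.Icc (r + 1) (2 * r)).filter fun i =>
      k ≤ if i ≤ r then lam 1 + lam i else lam (i - r)).card =
      ((Finset.Icc 1 r).filter fun i => k ≤ lam i).card := by
    apply Finset.card_bij' (fun i _ => i - r) (fun j _ => j + r)
    · intro i hi
      simp only [Finset.mem_filter, Finset.mem_Icc] at hi ⊢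
      have h1 : ¬ i ≤ r := by omega
      rw [if_neg h1] at hi
      exact ⟨⟨by omega, by omega⟩, hi.2⟩
    · intro j hj
      simp only [Finset.mem_filter, Finset.mem_Icc] at hj ⊢
      have h1 : ¬ j + r ≤ r := by omega
      rw [if_neg h1]
      simpa [Nat.add_sub_cancel] using ⟨⟨by omega, by omega⟩, hj.2⟩
    · intro i hi
      simp only [Finset.mem_filter, Finset.mem_Icc] at hi
      omega
    · intro j hj; omega
  rw [hA, hB]
  by_cases hk : k ≤ lam 1
  · rw [if_pos hk]
    have h1 : ((Finset.Icc 1 r).filter fun i => k ≤ lam 1 + lam i) = Finset.Icc 1 r := by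
      apply Finset.filter_true_of_mem
      intro i hi; omega
    have h2 : ((Finset.Icc 1 r).filter fun j => 1 ≤ lam j) = Finset.Icc 1 r := by
      apply Finset.filter_true_of_mem
      intro i hi
      simp [Finset.mem_Icc] at hi
      exact hpos i hi.1 hi.2
    rw [h1, h2]
  · rw [if_neg hk]
    have h1 : ((Finset.Icc 1 r).filter fun i => k ≤ lam 1 + lam i) =
        (Finset.Icc 1 r).filter fun j => k - lam 1 ≤ lam j := by
      apply Finset.filter_congr
      intro i _
      constructor <;> intro h <;> omega
    have h2 : ((Finset.Icc 1 r).filter fun i => k ≤ lam i) = ∅ := by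
      apply Finset.filter_false_of_mem
      intro i hi
      simp [Finset.mem_Icc] at hi
      have := hmono 1 i (le_refl 1) hi.1 hi.2
      omega
    rw [h1, h2]
    simp
end

section
/- Let R be a commutative Noetherian ring, I an ideal with a finite free resolution 0 → F₂ → F₁ → F₀ → I → 0, and F ∈ R an element such that (I : F) = (A, B) for a regular sequence A, B on R. Then from the short exact sequence 0 → R/(I:F) →(×F) R/I → R/(I,F) → 0 and the Koszul resolution of R/(A,B), the mapping cone yields a free resolution of (I,F) of the form 0 → F₂ ⊕ R → F₁ ⊕ R² → F₀ ⊕ R → (I,F) → 0. -/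
/-!
Resolve `R/(I : F) = R/(A, B)` by the Koszul complex `R → R² → R` and lift multiplication by `F`
to a comparison map into the resolution `F₂ → F₁ → F₀ → R` of `R/I`; the lifts exist because
`(A, B)F ⊆ I` and the resolution is exact. The mapping cone of this comparison map resolves
`R/(I, F)`: a cycle of the cone has a Koszul component which is a boundary, by exactness of the
Koszul complex in positive degrees and by `(I : F) = (A, B)` in degree `0`, and subtracting the
image of its preimage leaves a cycle of `F₂ → F₁ → F₀ → R`.
-/

open LinearMap

section MappingCone

variable {R : Type*} [Ring R]
  {F₂ F₁ F₀ K₂ K₁ K₀ : Type*}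
  [AddCommGroup F₂] [Module R F₂] [AddCommGroup F₁] [Module R F₁]
  [AddCommGroup F₀] [Module R F₀] [AddCommGroup K₂] [Module R K₂]
  [AddCommGroup K₁] [Module R K₁] [AddCommGroup K₀] [Module R K₀]

/-- Mapping-cone differential for a map `φ` that anticommutes with the differentials, which
absorbs the usual sign `(-1)ⁱ` into `φ`. -/
def coneDifferential (d : F₁ →ₗ[R] F₀) (φ : K₁ →ₗ[R] F₀) (e : K₁ →ₗ[R] K₀) :
    F₁ × K₁ →ₗ[R] F₀ × K₀ :=
  (d.coprod φ).prod (e ∘ₗ snd R F₁ K₁)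

@[simp]
theorem coneDifferential_apply (d : F₁ →ₗ[R] F₀) (φ : K₁ →ₗ[R] F₀) (e : K₁ →ₗ[R] K₀)
    (x : F₁ × K₁) : coneDifferential d φ e x = (d x.1 + φ x.2, e x.2) :=
  rfl

theorem coneDifferential_zero_right (d : F₁ →ₗ[R] F₀) (φ : K₁ →ₗ[R] F₀) :
    coneDifferential d φ (0 : K₁ →ₗ[R] K₁) = inl R F₀ K₁ ∘ₗ d.coprod φ := by
  ext <;> simp

theorem injective_coneDifferential {d : F₁ →ₗ[R] F₀} {e : K₁ →ₗ[R] K₀}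
    (hd : Function.Injective d) (he : Function.Injective e) (φ : K₁ →ₗ[R] F₀) :
    Function.Injective (coneDifferential d φ e) := by
  rw [← ker_eq_bot, eq_bot_iff]
  rintro ⟨f, k⟩ h
  simp only [mem_ker, coneDifferential_apply, Prod.mk_eq_zero] at h
  obtain rfl : k = 0 := he (by rw [h.2, map_zero])
  obtain rfl : f = 0 := hd (by simpa using h.1)
  exact zero_mem _

theorem exact_coneDifferential {d₂ : F₂ →ₗ[R] F₁} {d₁ : F₁ →ₗ[R] F₀}
    {e₂ : K₂ →ₗ[R] K₁} {e₁ : K₁ →ₗ[R] K₀} {φ₂ : K₂ →ₗ[R] F₁} {φ₁ : K₁ →ₗ[R] F₀}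
    (hd : Function.Exact d₂ d₁) (he : e₁ ∘ₗ e₂ = 0) (hφ : d₁ ∘ₗ φ₂ + φ₁ ∘ₗ e₂ = 0)
    (hlift : ∀ k, e₁ k = 0 → φ₁ k ∈ range d₁ → k ∈ range e₂) :
    Function.Exact (coneDifferential d₂ φ₂ e₂) (coneDifferential d₁ φ₁ e₁) := by
  have hφ' (k : K₂) : d₁ (φ₂ k) + φ₁ (e₂ k) = 0 := congr($hφ k)
  have he' (k : K₂) : e₁ (e₂ k) = 0 := congr($he k)
  refine exact_of_comp_of_mem_range (LinearMap.ext fun ⟨f, k⟩ ↦ ?_) ?_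
  · simp [hd.apply_apply_eq_zero, hφ', he']
  · rintro ⟨f, k⟩ h
    simp only [coneDifferential_apply, Prod.mk_eq_zero] at h
    obtain ⟨k', rfl⟩ := hlift k h.2 ⟨-f, by rw [map_neg, neg_eq_iff_add_eq_zero, h.1]⟩
    obtain ⟨f', hf'⟩ : f - φ₂ k' ∈ range d₂ := by
      rw [← hd.linearMap_ker_eq, mem_ker, map_sub, ← h.1, eq_neg_of_add_eq_zero_left (hφ' k')]
      abel
    exact ⟨(f', k'), by simp [hf']⟩

theorem exact_coneDifferential_coprod {d₂ : F₂ →ₗ[R] F₁} {d₁ : F₁ →ₗ[R] F₀}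
    {e₂ : K₂ →ₗ[R] K₁} {φ₂ : K₂ →ₗ[R] F₁} {φ₁ : K₁ →ₗ[R] F₀}
    (hd : Function.Exact d₂ d₁) (hφ : d₁ ∘ₗ φ₂ + φ₁ ∘ₗ e₂ = 0)
    (hlift : ∀ k, φ₁ k ∈ range d₁ → k ∈ range e₂) :
    Function.Exact (coneDifferential d₂ φ₂ e₂) (d₁.coprod φ₁) := by
  rw [← (inl_injective (R := R) (M := F₀) (M₂ := K₁)).comp_exact_iff_exact,
    ← coneDifferential_zero_right]
  exact exact_coneDifferential hd (zero_comp e₂) hφ fun k _ ↦ hlift k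

end MappingCone

section Koszul

variable {R : Type*} [CommRing R] {A B : R}

def koszulDiff₁ (A B : R) : R × R →ₗ[R] R :=
  (toSpanSingleton R R A).coprod (toSpanSingleton R R B)

def koszulDiff₂ (A B : R) : R →ₗ[R] R × R :=
  (toSpanSingleton R R (-B)).prod (toSpanSingleton R R A)

@[simp]
theorem koszulDiff₁_apply (x : R × R) : koszulDiff₁ A B x = x.1 * A + x.2 * B :=
  rfl

@[simp]
theorem koszulDiff₂_apply (x : R) : koszulDiff₂ A B x = (x * -B, x * A) :=
  rfl

theorem range_koszulDiff₁ (A B : R) : range (koszulDiff₁ A B) = Ideal.span {A, B} := by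
  rw [koszulDiff₁, range_coprod, range_toSpanSingleton, range_toSpanSingleton,
    Ideal.span_insert]

theorem koszulDiff₂_injective (hA : ∀ x : R, A * x = 0 → x = 0) :
    Function.Injective (koszulDiff₂ A B) := by
  rw [← ker_eq_bot, eq_bot_iff]
  intro x hx
  exact hA x (by simpa [mul_comm] using congr(Prod.snd $hx))

theorem exact_koszulDiff (hA : ∀ x : R, A * x = 0 → x = 0)
    (hB : ∀ x : R, B * x ∈ Ideal.span {A} → x ∈ Ideal.span {A}) :
    Function.Exact (koszulDiff₂ A B) (koszulDiff₁ A B) := by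
  refine exact_of_comp_of_mem_range (by ext; simp; ring) ?_
  rintro ⟨a, b⟩ h
  simp only [koszulDiff₁_apply] at h
  have hbA : B * b ∈ Ideal.span {A} := Ideal.mem_span_singleton'.mpr ⟨-a, by linear_combination -h⟩
  obtain ⟨x, rfl⟩ := Ideal.mem_span_singleton'.mp (hB b hbA)
  have ha : a = x * -B := by linear_combination hA (a + x * B) (by linear_combination h)
  exact ⟨x, by simp [ha]⟩

theorem exists_koszul_comparison {F₁ F₀ : Type*} [AddCommGroup F₁] [Module R F₁]
    [AddCommGroup F₀] [Module R F₀] {f₁ : F₁ →ₗ[R] F₀} {f₀ : F₀ →ₗ[R] R} {F : R}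
    (hex : Function.Exact f₁ f₀) (hAF : A * F ∈ range f₀) (hBF : B * F ∈ range f₀) :
    ∃ (φ₁ : R × R →ₗ[R] F₀) (φ₂ : R →ₗ[R] F₁),
      f₀ ∘ₗ φ₁ + toSpanSingleton R R F ∘ₗ koszulDiff₁ A B = 0 ∧
      f₁ ∘ₗ φ₂ + φ₁ ∘ₗ koszulDiff₂ A B = 0 := by
  obtain ⟨α, hα⟩ := hAF
  obtain ⟨β, hβ⟩ := hBF
  obtain ⟨γ, hγ⟩ : A • β - B • α ∈ range f₁ := by
    rw [← hex.linearMap_ker_eq, mem_ker, map_sub, map_smul, map_smul, hα, hβ, smul_eq_mul,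
      smul_eq_mul]
    ring
  refine ⟨-(toSpanSingleton R F₀ α).coprod (toSpanSingleton R F₀ β), toSpanSingleton R F₁ γ,
    ?_, ?_⟩
  · ext <;> simp [hα, hβ]
  · ext
    simp only [comp_apply, LinearMap.add_apply, toSpanSingleton_apply, one_smul, hγ,
      koszulDiff₂_apply, LinearMap.neg_apply, coprod_apply, LinearMap.zero_apply]
    module

end Koszul

theorem mapping_cone_resolution_general {R : Type*} [CommRing R]
    (I : Ideal R) (F A B : R)
    (F2 F1 F0 : Type*)
    [AddCommGroup F2] [Module R F2]
    [AddCommGroup F1] [Module R F1]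
    [AddCommGroup F0] [Module R F0]
    (f2 : F2 →ₗ[R] F1) (f1 : F1 →ₗ[R] F0) (f0 : F0 →ₗ[R] R)
    (hinj : Function.Injective f2)
    (hex21 : Function.Exact f2 f1)
    (hex10 : Function.Exact f1 f0)
    (hrange : LinearMap.range f0 = I)
    (hcolon : ∀ x : R, x * F ∈ I ↔ x ∈ Ideal.span {A, B})
    (hA : ∀ x : R, A * x = 0 → x = 0)
    (hB : ∀ x : R, B * x ∈ Ideal.span {A} → x ∈ Ideal.span {A}) :
    ∃ (g2 : (F2 × R) →ₗ[R] (F1 × (R × R))) (g1 : (F1 × (R × R)) →ₗ[R] (F0 × R))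
      (g0 : (F0 × R) →ₗ[R] R),
      Function.Injective g2 ∧ Function.Exact g2 g1 ∧ Function.Exact g1 g0 ∧
      LinearMap.range g0 = I ⊔ Ideal.span {F} := by
  have hcolon' (x : R) : x * F ∈ range f0 ↔ x ∈ range (koszulDiff₁ A B) := by
    rw [hrange, range_koszulDiff₁, hcolon]
  obtain ⟨φ₁, φ₂, hφ₁, hφ₂⟩ := exists_koszul_comparison hex10
    ((hcolon' A).2 ⟨(1, 0), by simp⟩) ((hcolon' B).2 ⟨(0, 1), by simp⟩)
  have hkoszul := exact_koszulDiff hA hB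
  refine ⟨coneDifferential f2 φ₂ (koszulDiff₂ A B), coneDifferential f1 φ₁ (koszulDiff₁ A B),
    f0.coprod (toSpanSingleton R R F),
    injective_coneDifferential hinj (koszulDiff₂_injective hA) φ₂,
    exact_coneDifferential hex21 hkoszul.linearMap_comp_eq_zero hφ₂ fun k hk _ ↦ (hkoszul k).1 hk,
    exact_coneDifferential_coprod hex10 hφ₁ fun c ↦ (hcolon' c).1, ?_⟩
  rw [range_coprod, hrange, range_toSpanSingleton]

/-- (mapping cone) Let `R` be commutative Noetherian, `I` an ideal
with a finite free resolution `0 → F₂ → F₁ → F₀ → I → 0`, and `F ∈ R` with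
`(I : F) = (A,B)` for a regular sequence `A, B`.  Then `(I,F)` has a free
resolution `0 → F₂ ⊕ R → F₁ ⊕ R² → F₀ ⊕ R → (I,F) → 0`. -/
theorem mapping_cone_resolution {R : Type*} [CommRing R] [IsNoetherianRing R]
    (I : Ideal R) (F A B : R)
    (F2 F1 F0 : Type*)
    [AddCommGroup F2] [Module R F2] [Module.Free R F2] [Module.Finite R F2]
    [AddCommGroup F1] [Module R F1] [Module.Free R F1] [Module.Finite R F1]
    [AddCommGroup F0] [Module R F0] [Module.Free R F0] [Module.Finite R F0]
    (f2 : F2 →ₗ[R] F1) (f1 : F1 →ₗ[R] F0) (f0 : F0 →ₗ[R] R)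
    (hinj : Function.Injective f2)
    (hex21 : Function.Exact f2 f1)
    (hex10 : Function.Exact f1 f0)
    (hrange : LinearMap.range f0 = I)
    (hcolon : ∀ x : R, x * F ∈ I ↔ x ∈ Ideal.span {A, B})
    (hA : ∀ x : R, A * x = 0 → x = 0)
    (hB : ∀ x : R, B * x ∈ Ideal.span {A} → x ∈ Ideal.span {A}) :
    ∃ (g2 : (F2 × R) →ₗ[R] (F1 × (R × R))) (g1 : (F1 × (R × R)) →ₗ[R] (F0 × R))
      (g0 : (F0 × R) →ₗ[R] R),
      Function.Injective g2 ∧ Function.Exact g2 g1 ∧ Function.Exact g1 g0 ∧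
      LinearMap.range g0 = I ⊔ Ideal.span {F} :=
  mapping_cone_resolution_general I F A B F2 F1 F0 f2 f1 f0 hinj hex21 hex10 hrange hcolon hA hB
end

section
/- In the ring S = k[x₀,x₁,y₀,y₁], let A be a product of pairwise non-associate linear forms in x₀,x₁ and B a product of pairwise non-associate linear forms in y₀,y₁. Then A, B form a regular sequence in S, and the ideal (A,B) is the intersection ⋂ (L, L') over all pairs (L, L') with L a linear factor of A and L' a linear factor of B. -/
/-!
In a commutative ring, if `f` is a nonzerodivisor modulo `I + (g)` then
`(I + (f)) ∩ (I + (g)) = I + (f g)`. Applied one linear factor at a time, this turns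
`⋂ (L_m, L'_n)` into `⋂_m (L_m, B)` and then into `(A, B)`, and `⋂ (L_m)` into `(A)`.

The nonzerodivisor conditions are checked with the substitution `X i := -(q/p) X j`, which kills
`p X i + q X j` and is the identity modulo it; so for `G` free of `X i`, a polynomial lies in
`(G, p X i + q X j)` iff `G` divides its substitute. Another form `p' X i + q' X j` becomes
`((p q' - q p') / p) X j`, a nonzero multiple of a variable that does not occur in `G` precisely
when the two forms are not proportional.
-/

open MvPolynomial

section Ideals

variable {R : Type*} [CommRing R]

theorem Ideal.sup_span_singleton_inf_sup_span_singleton (I : Ideal R) {f g : R}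
    (h : IsSMulRegular (R ⧸ I ⊔ Ideal.span {g}) f) :
    (I ⊔ Ideal.span {f}) ⊓ (I ⊔ Ideal.span {g}) = I ⊔ Ideal.span {f * g} := by
  refine le_antisymm ?_ (le_inf ?_ ?_)
  · rintro x ⟨hxf, hxg⟩
    obtain ⟨i, hi, _, hf, rfl⟩ := Submodule.mem_sup.mp hxf
    obtain ⟨u, rfl⟩ := Ideal.mem_span_singleton'.mp hf
    have hu : u ∈ I ⊔ Ideal.span {g} :=
      (isSMulRegular_quotient_iff_mem_of_smul_mem _ f).mp h u <| by
        rw [smul_eq_mul, show f * u = i + u * f - i by ring]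
        exact sub_mem hxg (Ideal.mem_sup_left hi)
    obtain ⟨i', hi', _, hg, rfl⟩ := Submodule.mem_sup.mp hu
    obtain ⟨w, rfl⟩ := Ideal.mem_span_singleton'.mp hg
    rw [show i + (i' + w * g) * f = (i + f * i') + w * (f * g) by ring]
    exact add_mem (Ideal.mem_sup_left (add_mem hi (I.mul_mem_left f hi')))
      (Ideal.mem_sup_right (Ideal.mul_mem_left _ w (Ideal.mem_span_singleton_self _)))
  · exact sup_le_sup_left (Ideal.span_singleton_le_span_singleton.mpr (dvd_mul_right f g)) I
  · exact sup_le_sup_left (Ideal.span_singleton_le_span_singleton.mpr (dvd_mul_left g f)) I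

theorem Ideal.biInf_sup_span_singleton {ι : Type*} (I : Ideal R) (s : Finset ι) (f : ι → R)
    (h : ∀ i ∈ s, ∀ j ∈ s, i ≠ j → IsSMulRegular (R ⧸ I ⊔ Ideal.span {f j}) (f i)) :
    ⨅ i ∈ s, I ⊔ Ideal.span {f i} = I ⊔ Ideal.span {∏ i ∈ s, f i} := by
  classical
  induction s using Finset.induction_on with
  | empty => simp
  | insert j s hj ih =>
    have hprod : IsSMulRegular (R ⧸ I ⊔ Ideal.span {f j}) (∏ i ∈ s, f i) :=
      Finset.prod_induction _ _ (fun _ _ => IsSMulRegular.mul) (IsSMulRegular.one _)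
        fun i hi => h i (Finset.mem_insert_of_mem hi) j (Finset.mem_insert_self j s)
          (ne_of_mem_of_not_mem hi hj)
    rw [Finset.iInf_insert, ih fun i hi j' hj' => h i (Finset.mem_insert_of_mem hi) j'
        (Finset.mem_insert_of_mem hj'), inf_comm,
      Ideal.sup_span_singleton_inf_sup_span_singleton I hprod, Finset.prod_insert hj, mul_comm]

theorem Ideal.iInf_sup_span_singleton {ι : Type*} [Fintype ι] (I : Ideal R) (f : ι → R)
    (h : Pairwise fun i j => IsSMulRegular (R ⧸ I ⊔ Ideal.span {f j}) (f i)) :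
    ⨅ i, I ⊔ Ideal.span {f i} = I ⊔ Ideal.span {∏ i, f i} := by
  simpa using Ideal.biInf_sup_span_singleton I Finset.univ f fun i _ j _ hij => h hij

theorem Ideal.mem_span_singleton_sup_span_singleton_iff_dvd {F : Type*} [FunLike F R R]
    [RingHomClass F R R] {r : F} {G L : R} (hrL : r L = 0) (hrG : r G = G)
    (hr : ∀ x, x - r x ∈ Ideal.span {L}) (f : R) :
    f ∈ Ideal.span {G} ⊔ Ideal.span {L} ↔ G ∣ r f := by
  constructor
  · intro hf
    obtain ⟨_, hg, _, hl, rfl⟩ := Submodule.mem_sup.mp hf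
    obtain ⟨a, rfl⟩ := Ideal.mem_span_singleton'.mp hg
    obtain ⟨b, rfl⟩ := Ideal.mem_span_singleton'.mp hl
    exact ⟨r a, by rw [map_add, map_mul, map_mul, hrL, hrG, mul_zero, add_zero, mul_comm]⟩
  · rintro ⟨c, hc⟩
    rw [← sub_add_cancel f (r f), add_comm]
    refine add_mem (Ideal.mem_sup_left ?_) (Ideal.mem_sup_right (hr f))
    exact hc ▸ Ideal.mul_mem_right _ _ (Ideal.mem_span_singleton_self G)

theorem isSMulRegular_quotient_of_retraction {F : Type*} [FunLike F R R]
    [RingHomClass F R R] {r : F} {G L : R} (hrL : r L = 0) (hrG : r G = G)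
    (hr : ∀ x, x - r x ∈ Ideal.span {L}) {ℓ : R} (hℓ : ∀ u, G ∣ r ℓ * u → G ∣ u) :
    IsSMulRegular (R ⧸ Ideal.span {G} ⊔ Ideal.span {L}) ℓ := by
  rw [isSMulRegular_quotient_iff_mem_of_smul_mem]
  intro u hu
  rw [smul_eq_mul, Ideal.mem_span_singleton_sup_span_singleton_iff_dvd hrL hrG hr,
    map_mul] at hu
  exact (Ideal.mem_span_singleton_sup_span_singleton_iff_dvd hrL hrG hr u).mpr (hℓ _ hu)

end Ideals

namespace MvPolynomial

variable {σ k : Type*} [Field k]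

noncomputable def linearForm (i j : σ) (v : k × k) : MvPolynomial σ k :=
  C v.1 * X i + C v.2 * X j

theorem linearForm_comm (i j : σ) (v : k × k) : linearForm i j v = linearForm j i v.swap :=
  add_comm _ _

theorem linearForm_mem_supported (i j : σ) (v : k × k) :
    linearForm i j v ∈ supported k {i, j} :=
  add_mem (mul_mem (Subalgebra.algebraMap_mem _ v.1) (X_mem_supported.mpr (by simp)))
    (mul_mem (Subalgebra.algebraMap_mem _ v.2) (X_mem_supported.mpr (by simp)))

theorem linearForm_ne_zero {i j : σ} (hij : i ≠ j) {v : k × k} (hv : v ≠ 0) :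
    linearForm i j v ≠ 0 := by
  classical
  intro h
  have h1 := congr_arg (coeff (Finsupp.single i 1)) h
  have h2 := congr_arg (coeff (Finsupp.single j 1)) h
  simp only [linearForm, coeff_add, coeff_C_mul, coeff_X, Finsupp.single_left_inj one_ne_zero,
    hij, hij.symm, ↓reduceIte, mul_one, mul_zero, add_zero, zero_add, coeff_zero] at h1 h2
  exact hv (Prod.ext h1 h2)

variable [DecidableEq σ]

noncomputable def substX (i : σ) (g : MvPolynomial σ k) :
    MvPolynomial σ k →ₐ[k] MvPolynomial σ k :=
  aeval (Function.update X i g)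

@[simp]
theorem substX_X_self (i : σ) (g : MvPolynomial σ k) : substX i g (X i) = g := by
  simp [substX]

@[simp]
theorem substX_X_of_ne {i t : σ} (g : MvPolynomial σ k) (h : t ≠ i) :
    substX i g (X t) = X t := by
  simp [substX, h]

theorem sub_substX_mem_span (i : σ) (g f : MvPolynomial σ k) :
    f - substX i g f ∈ Ideal.span {X i - g} := by
  have hmk : (Ideal.Quotient.mkₐ k (Ideal.span {X i - g})).comp (substX i g) =
      Ideal.Quotient.mkₐ k _ := by
    ext t
    by_cases h : t = i
    · subst h
      simp only [AlgHom.comp_apply, substX_X_self, Ideal.Quotient.mkₐ_eq_mk]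
      exact (Ideal.Quotient.eq.mpr (Ideal.mem_span_singleton_self _)).symm
    · simp [h]
  rw [← Ideal.Quotient.eq, ← Ideal.Quotient.mkₐ_eq_mk k]
  exact (AlgHom.congr_fun hmk f).symm

theorem substX_eq_self_of_mem_supported {s : Set σ} {i : σ} (hi : i ∉ s)
    (g : MvPolynomial σ k) {G : MvPolynomial σ k} (hG : G ∈ supported k s) :
    substX i g G = G := by
  rw [supported_eq_adjoin_X] at hG
  refine Algebra.adjoin_le (S := AlgHom.equalizer (substX i g) (AlgHom.id k _)) ?_ hG
  rintro _ ⟨t, ht, rfl⟩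
  exact substX_X_of_ne g (ne_of_mem_of_not_mem ht hi)

theorem dvd_of_dvd_X_mul_of_mem_supported {s : Set σ} {j : σ} (hj : j ∉ s)
    {G u : MvPolynomial σ k} (hG : G ∈ supported k s) (h : G ∣ X j * u) : G ∣ u := by
  obtain ⟨w, hw⟩ := h
  rcases eq_or_ne G 0 with rfl | hG0
  · simpa [X_ne_zero] using hw
  have hw0 : substX j 0 w = 0 := by
    simpa [substX_eq_self_of_mem_supported hj 0 hG, hG0] using congr_arg (substX j 0) hw
  obtain ⟨w', rfl⟩ : X j ∣ w := by
    simpa [hw0] using Ideal.mem_span_singleton.mp (sub_substX_mem_span j 0 w)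
  exact ⟨w', mul_left_cancel₀ (X_ne_zero j) (by rw [hw]; ring)⟩

theorem substX_linearForm {i j : σ} (hij : i ≠ j) {v : k × k} (hv : v.1 ≠ 0) (w : k × k) :
    substX i (C (-(v.2 / v.1)) * X j) (linearForm i j w) =
      C ((v.1 * w.2 - v.2 * w.1) / v.1) * X j := by
  rw [show (v.1 * w.2 - v.2 * w.1) / v.1 = w.1 * -(v.2 / v.1) + w.2 by field_simp; ring]
  simp only [linearForm, map_add, map_mul, algHom_C, algebraMap_eq, substX_X_self,
    substX_X_of_ne _ hij.symm]
  ring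

theorem sub_substX_mem_span_linearForm (i j : σ) {v : k × k} (hv : v.1 ≠ 0)
    (f : MvPolynomial σ k) :
    f - substX i (C (-(v.2 / v.1)) * X j) f ∈ Ideal.span {linearForm i j v} := by
  refine Ideal.span_singleton_le_span_singleton.mpr ⟨C v.1⁻¹, ?_⟩ (sub_substX_mem_span i _ f)
  have hinv : C v.1 * C v.1⁻¹ = (1 : MvPolynomial σ k) := by
    rw [← C_mul, mul_inv_cancel₀ hv, C_1]
  simp only [linearForm, div_eq_mul_inv, C_neg, C_mul]
  linear_combination -(X i) * hinv

theorem isSMulRegular_quotient_linearForm_of_fst_ne_zero {i j : σ} (hij : i ≠ j) {v : k × k}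
    (hv : v.1 ≠ 0) {s : Set σ} (hi : i ∉ s) {G ℓ : MvPolynomial σ k} (hG : G ∈ supported k s)
    (hℓ : ∀ u, G ∣ substX i (C (-(v.2 / v.1)) * X j) ℓ * u → G ∣ u) :
    IsSMulRegular (MvPolynomial σ k ⧸ Ideal.span {G} ⊔ Ideal.span {linearForm i j v}) ℓ :=
  isSMulRegular_quotient_of_retraction
    (by rw [substX_linearForm hij hv, mul_comm v.1, sub_self, zero_div, C_0, zero_mul])
    (substX_eq_self_of_mem_supported hi _ hG) (sub_substX_mem_span_linearForm i j hv) hℓ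

theorem isSMulRegular_quotient_linearForm_linearForm_of_fst_ne_zero {i j : σ} (hij : i ≠ j)
    {v w : k × k} (hv : v.1 ≠ 0) (hvw : v.1 * w.2 ≠ v.2 * w.1) {s : Set σ} (hi : i ∉ s)
    (hj : j ∉ s) {G : MvPolynomial σ k} (hG : G ∈ supported k s) :
    IsSMulRegular (MvPolynomial σ k ⧸ Ideal.span {G} ⊔ Ideal.span {linearForm i j v})
      (linearForm i j w) := by
  refine isSMulRegular_quotient_linearForm_of_fst_ne_zero hij hv hi hG fun u hu => ?_
  have hc : IsUnit (C ((v.1 * w.2 - v.2 * w.1) / v.1) : MvPolynomial σ k) :=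
    (div_ne_zero (sub_ne_zero.mpr hvw) hv).isUnit.map C
  rw [substX_linearForm hij hv, mul_assoc, hc.dvd_mul_left] at hu
  exact dvd_of_dvd_X_mul_of_mem_supported hj hG hu

theorem isSMulRegular_quotient_linearForm_linearForm {i j : σ} (hij : i ≠ j) {v w : k × k}
    (hv : v ≠ 0) (hvw : v.1 * w.2 ≠ v.2 * w.1) {s : Set σ} (hi : i ∉ s) (hj : j ∉ s)
    {G : MvPolynomial σ k} (hG : G ∈ supported k s) :
    IsSMulRegular (MvPolynomial σ k ⧸ Ideal.span {G} ⊔ Ideal.span {linearForm i j v})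
      (linearForm i j w) := by
  rcases ne_or_eq v.1 0 with hv1 | hv1
  · exact isSMulRegular_quotient_linearForm_linearForm_of_fst_ne_zero hij hv1 hvw hi hj hG
  · rw [linearForm_comm i j v, linearForm_comm i j w]
    exact isSMulRegular_quotient_linearForm_linearForm_of_fst_ne_zero hij.symm
      (fun hv2 => hv (Prod.ext hv1 hv2)) (fun h => hvw h.symm) hj hi hG

theorem isSMulRegular_quotient_linearForm_of_mem_supported {i j : σ} (hij : i ≠ j)
    {v : k × k} (hv : v ≠ 0) {s : Set σ} (hi : i ∉ s) (hj : j ∉ s) {ℓ : MvPolynomial σ k}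
    (hℓ : ℓ ∈ supported k s) (hℓ0 : ℓ ≠ 0) :
    IsSMulRegular (MvPolynomial σ k ⧸ Ideal.span {linearForm i j v}) ℓ := by
  have key : ∀ {i j : σ}, i ≠ j → i ∉ s → ∀ {v : k × k}, v.1 ≠ 0 →
      IsSMulRegular (MvPolynomial σ k ⧸ Ideal.span {linearForm i j v}) ℓ := by
    intro i j hij hi v hv
    have h := isSMulRegular_quotient_linearForm_of_fst_ne_zero hij hv hi (zero_mem _) fun u hu => by
      rwa [substX_eq_self_of_mem_supported hi _ hℓ, zero_dvd_iff, mul_eq_zero,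
        or_iff_right hℓ0, ← zero_dvd_iff] at hu
    rwa [Ideal.span_singleton_eq_bot.mpr rfl, bot_sup_eq] at h
  rcases ne_or_eq v.1 0 with hv1 | hv1
  · exact key hij hi hv1
  · rw [linearForm_comm i j v]
    exact key hij.symm hj fun hv2 => hv (Prod.ext hv1 hv2)

section Products

variable {ι : Type*} [Fintype ι] {i j : σ} {v : ι → k × k} {s : Set σ}

theorem sup_span_prod_linearForm_eq_iInf (hij : i ≠ j) (hv0 : ∀ m, v m ≠ 0)
    (hv : Pairwise fun m m' => (v m).1 * (v m').2 ≠ (v m).2 * (v m').1) (hi : i ∉ s) (hj : j ∉ s)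
    {G : MvPolynomial σ k} (hG : G ∈ supported k s) :
    Ideal.span {G} ⊔ Ideal.span {∏ m, linearForm i j (v m)} =
      ⨅ m, Ideal.span {G} ⊔ Ideal.span {linearForm i j (v m)} :=
  (Ideal.iInf_sup_span_singleton _ _ fun _ m' h =>
    isSMulRegular_quotient_linearForm_linearForm hij (hv0 m') (hv h.symm) hi hj hG).symm

theorem isSMulRegular_quotient_span_prod_linearForm (hij : i ≠ j) (hv0 : ∀ m, v m ≠ 0)
    (hv : Pairwise fun m m' => (v m).1 * (v m').2 ≠ (v m).2 * (v m').1) (hi : i ∉ s) (hj : j ∉ s)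
    {ℓ : MvPolynomial σ k} (hℓ : ℓ ∈ supported k s) (hℓ0 : ℓ ≠ 0) :
    IsSMulRegular (MvPolynomial σ k ⧸ Ideal.span {∏ m, linearForm i j (v m)}) ℓ := by
  have hprod := sup_span_prod_linearForm_eq_iInf hij hv0 hv (Set.notMem_empty i)
    (Set.notMem_empty j) (zero_mem (supported k ∅))
  simp only [Ideal.span_singleton_eq_bot.mpr, bot_sup_eq] at hprod
  rw [isSMulRegular_quotient_iff_mem_of_smul_mem, hprod]
  intro u hu
  rw [Submodule.mem_iInf] at hu ⊢
  exact fun m => (isSMulRegular_quotient_iff_mem_of_smul_mem _ _).mp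
    (isSMulRegular_quotient_linearForm_of_mem_supported hij (hv0 m) hi hj hℓ hℓ0) u (hu m)

end Products

end MvPolynomial

theorem product_linear_forms_ci_general {k : Type*} [Field k]
    (a b : ℕ) (R : Fin a → k × k) (Q : Fin b → k × k)
    (hR0 : ∀ m, R m ≠ 0) (hQ0 : ∀ n, Q n ≠ 0)
    (hRdist : ∀ m m', m ≠ m' → (R m).1 * (R m').2 ≠ (R m).2 * (R m').1)
    (hQdist : ∀ n n', n ≠ n' → (Q n).1 * (Q n').2 ≠ (Q n).2 * (Q n').1)
    (L : Fin a → MvPolynomial (Fin 4) k) (L' : Fin b → MvPolynomial (Fin 4) k)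
    (hL : ∀ m, L m = C (R m).1 * X 0 + C (R m).2 * X 1)
    (hL' : ∀ n, L' n = C (Q n).1 * X 2 + C (Q n).2 * X 3) :
    (∀ x : MvPolynomial (Fin 4) k, (∏ m, L m) * x = 0 → x = 0) ∧
    (∀ x : MvPolynomial (Fin 4) k,
      (∏ n, L' n) * x ∈ Ideal.span {∏ m, L m} → x ∈ Ideal.span {∏ m, L m}) ∧
    Ideal.span {∏ m, L m, ∏ n, L' n} = ⨅ m, ⨅ n, Ideal.span {L m, L' n} := by
  obtain rfl : L = fun m => linearForm 0 1 (R m) := funext hL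
  obtain rfl : L' = fun n => linearForm 2 3 (Q n) := funext hL'
  beta_reduce
  set A := ∏ m, linearForm (0 : Fin 4) 1 (R m)
  set B := ∏ n, linearForm (2 : Fin 4) 3 (Q n)
  have hB0 : B ≠ 0 :=
    Finset.prod_ne_zero_iff.mpr fun n _ => linearForm_ne_zero (by decide) (hQ0 n)
  have hB : B ∈ supported k {2, 3} :=
    Subalgebra.prod_mem _ fun n _ => linearForm_mem_supported 2 3 (Q n)
  refine ⟨fun x hx => (mul_eq_zero.mp hx).resolve_left ?_, fun x => ?_, ?_⟩
  · exact Finset.prod_ne_zero_iff.mpr fun m _ => linearForm_ne_zero (by decide) (hR0 m)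
  · exact (isSMulRegular_quotient_iff_mem_of_smul_mem _ _).mp
      (isSMulRegular_quotient_span_prod_linearForm (by decide) hR0 hRdist (by simp) (by simp)
        hB hB0) x
  · calc Ideal.span {A, B}
        = Ideal.span {B} ⊔ Ideal.span {A} := by rw [Ideal.span_insert, sup_comm]
      _ = ⨅ m, Ideal.span {B} ⊔ Ideal.span {linearForm 0 1 (R m)} :=
        sup_span_prod_linearForm_eq_iInf (by decide) hR0 hRdist (by simp) (by simp) hB
      _ = _ := iInf_congr fun m => by
        rw [sup_comm, sup_span_prod_linearForm_eq_iInf (by decide) hQ0 hQdist (by simp) (by simp)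
          (linearForm_mem_supported 0 1 (R m))]
        simp_rw [Ideal.span_insert]

/-- in `S = k[x₀,x₁,y₀,y₁]`, if `A` is a product of pairwise
non-associate linear forms in `x₀, x₁` and `B` a product of pairwise
non-associate linear forms in `y₀, y₁`, then `A, B` is a regular sequence and
`(A,B) = ⋂_{m,n} (L_m, L'_n)`, the intersection over all pairs of linear
factors. -/
theorem product_linear_forms_ci {k : Type*} [Field k] [IsAlgClosed k] [CharZero k]
    (a b : ℕ) (R : Fin a → k × k) (Q : Fin b → k × k)
    (hR0 : ∀ m, R m ≠ 0) (hQ0 : ∀ n, Q n ≠ 0)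
    (hRdist : ∀ m m', m ≠ m' → (R m).1 * (R m').2 ≠ (R m).2 * (R m').1)
    (hQdist : ∀ n n', n ≠ n' → (Q n).1 * (Q n').2 ≠ (Q n).2 * (Q n').1)
    (L : Fin a → MvPolynomial (Fin 4) k) (L' : Fin b → MvPolynomial (Fin 4) k)
    (hL : ∀ m, L m = C (R m).1 * X 0 + C (R m).2 * X 1)
    (hL' : ∀ n, L' n = C (Q n).1 * X 2 + C (Q n).2 * X 3) :
    (∀ x : MvPolynomial (Fin 4) k, (∏ m, L m) * x = 0 → x = 0) ∧
    (∀ x : MvPolynomial (Fin 4) k,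
      (∏ n, L' n) * x ∈ Ideal.span {∏ m, L m} → x ∈ Ideal.span {∏ m, L m}) ∧
    Ideal.span {∏ m, L m, ∏ n, L' n} = ⨅ m, ⨅ n, Ideal.span {L m, L' n} :=
  product_linear_forms_ci_general a b R Q hR0 hQ0 hRdist hQdist L L' hL hL'
end

section
/- Let λ = (λ₁,…,λ_r) be a partition with d(λ) ≥ 1, and let C₀ be its base corners ordered lexicographically. For every corner (i,j) in C = C₀ ∪ {(i_a, j_b) : (i_a,j_a),(i_b,j_b) ∈ C₀, a > b}, there exist non-negative integers c and d such that (i+c+1, j), (i, j+d+1), and (i+c+1, j+d+1) each lie in C or in the set of outside corners OC = {(r+1,1),(1,λ₁+1),(r+1,λ₁+1)} ∪ {(r+1,j'),(i',λ₁+1) : (i',j') ∈ C₀}. -/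
/-- (Observation 3.11) for every corner `(i,j)` of `Z` there
exist non-negative integers `c` and `d` such that `(i+c+1, j)`, `(i, j+d+1)`,
and `(i+c+1, j+d+1)` are corners or outside corners of `Z`. -/
theorem corners_observation (r : ℕ) (hr : 1 ≤ r) (lam : ℕ → ℕ)
    (hmono : ∀ i j, 1 ≤ i → i ≤ j → j ≤ r → lam j ≤ lam i)
    (hpos : ∀ i, 1 ≤ i → i ≤ r → 1 ≤ lam i)
    (hd : ((Finset.Icc 2 r).filter fun i => lam i < lam (i - 1)).Nonempty) :
    let D := (Finset.Icc 2 r).filter fun i => lam i < lam (i - 1)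
    let C0 : Finset (ℕ × ℕ) := D.image fun i => (i, lam i + 1)
    let C : Finset (ℕ × ℕ) :=
      C0 ∪ ((C0 ×ˢ C0).filter fun p => p.2.1 < p.1.1).image fun p => (p.1.1, p.2.2)
    let OC : Finset (ℕ × ℕ) :=
      ({(r + 1, 1), (1, lam 1 + 1), (r + 1, lam 1 + 1)} : Finset (ℕ × ℕ)) ∪
        C0.image (fun p => (r + 1, p.2)) ∪ C0.image (fun p => (p.1, lam 1 + 1))
    ∀ q ∈ C, ∃ c d : ℕ,
      (q.1 + c + 1, q.2) ∈ C ∪ OC ∧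
      (q.1, q.2 + d + 1) ∈ C ∪ OC ∧
      (q.1 + c + 1, q.2 + d + 1) ∈ C ∪ OC := by
  intro D C0 C OC
  -- basic membership facts
  have hDmem : ∀ a, a ∈ D → 2 ≤ a ∧ a ≤ r ∧ lam a < lam (a - 1) := by
    intro a ha
    have h := Finset.mem_filter.mp ha
    have h2 := Finset.mem_Icc.mp h.1
    exact ⟨h2.1, h2.2, h.2⟩
  have hC0 : ∀ a, a ∈ D → (a, lam a + 1) ∈ C0 := fun a ha =>
    Finset.mem_image.mpr ⟨a, ha, rfl⟩
  have hCle : ∀ a b, a ∈ D → b ∈ D → b ≤ a → (a, lam b + 1) ∈ C := by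
    intro a b ha hb hba
    rcases eq_or_lt_of_le hba with rfl | h
    · exact Finset.mem_union_left _ (hC0 b ha)
    · refine Finset.mem_union_right _ (Finset.mem_image.mpr
        ⟨((a, lam a + 1), (b, lam b + 1)), ?_, rfl⟩)
      exact Finset.mem_filter.mpr ⟨Finset.mem_product.mpr ⟨hC0 a ha, hC0 b hb⟩, h⟩
  have hOC1 : ∀ b, b ∈ D → (r + 1, lam b + 1) ∈ OC := fun b hb =>
    Finset.mem_union_left _ (Finset.mem_union_right _
      (Finset.mem_image.mpr ⟨(b, lam b + 1), hC0 b hb, rfl⟩))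
  have hOC2 : ∀ a, a ∈ D → (a, lam 1 + 1) ∈ OC := fun a ha =>
    Finset.mem_union_right _
      (Finset.mem_image.mpr ⟨(a, lam a + 1), hC0 a ha, rfl⟩)
  have hOC3 : (r + 1, lam 1 + 1) ∈ OC :=
    Finset.mem_union_left _ (Finset.mem_union_left _ (by simp))
  -- main claim for a point (a, lam b + 1) with b ≤ a, both in D
  have main : ∀ a b, a ∈ D → b ∈ D → b ≤ a → ∃ c d : ℕ,
      (a + c + 1, lam b + 1) ∈ C ∪ OC ∧
      (a, lam b + 1 + d + 1) ∈ C ∪ OC ∧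
      (a + c + 1, lam b + 1 + d + 1) ∈ C ∪ OC := by
    intro a b ha hb hba
    obtain ⟨ha1, ha2, -⟩ := hDmem a ha
    obtain ⟨hb1, hb2, hb3⟩ := hDmem b hb
    obtain ⟨i', hlt, hi'⟩ : ∃ i', a < i' ∧ (i' ∈ D ∨ i' = r + 1) := by
      by_cases h : (D.filter fun x => a < x).Nonempty
      · obtain ⟨x, hx⟩ := h
        have hx' := Finset.mem_filter.mp hx
        exact ⟨x, hx'.2, Or.inl hx'.1⟩
      · exact ⟨r + 1, by omega, Or.inr rfl⟩
    obtain ⟨m, hm, hmor⟩ : ∃ m, lam b < m ∧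
        ((∃ b', b' ∈ D ∧ b' < b ∧ m = lam b') ∨ m = lam 1) := by
      by_cases h : (D.filter fun x => x < b).Nonempty
      · obtain ⟨b', hb'⟩ := h
        have hb'' := Finset.mem_filter.mp hb'
        obtain ⟨hb'1, hb'2, -⟩ := hDmem b' hb''.1
        have h1 : lam (b - 1) ≤ lam b' := hmono b' (b - 1) (by omega) (by omega) (by omega)
        exact ⟨lam b', by omega, Or.inl ⟨b', hb''.1, hb''.2, rfl⟩⟩
      · have h1 : lam (b - 1) ≤ lam 1 := hmono 1 (b - 1) (by omega) (by omega) (by omega)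
        exact ⟨lam 1, by omega, Or.inr rfl⟩
    refine ⟨i' - a - 1, m - lam b - 1, ?_, ?_, ?_⟩
    · have e : a + (i' - a - 1) + 1 = i' := by omega
      rw [e]
      rcases hi' with h | h
      · exact Finset.mem_union_left _ (hCle i' b h hb (by omega))
      · rw [h]; exact Finset.mem_union_right _ (hOC1 b hb)
    · have e : lam b + 1 + (m - lam b - 1) + 1 = m + 1 := by omega
      rw [e]
      rcases hmor with ⟨b', hb'D, hb'lt, rfl⟩ | rfl
      · exact Finset.mem_union_left _ (hCle a b' ha hb'D (by omega))
      · exact Finset.mem_union_right _ (hOC2 a ha)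
    · have e : lam b + 1 + (m - lam b - 1) + 1 = m + 1 := by omega
      have e2 : a + (i' - a - 1) + 1 = i' := by omega
      rw [e, e2]
      rcases hi' with h | h
      · rcases hmor with ⟨b', hb'D, hb'lt, rfl⟩ | rfl
        · exact Finset.mem_union_left _ (hCle i' b' h hb'D (by omega))
        · exact Finset.mem_union_right _ (hOC2 i' h)
      · subst h
        rcases hmor with ⟨b', hb'D, hb'lt, rfl⟩ | rfl
        · exact Finset.mem_union_right _ (hOC1 b' hb'D)
        · exact Finset.mem_union_right _ hOC3
    
  intro q hq
  rcases Finset.mem_union.mp hq with h | h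
  · obtain ⟨a, ha, rfl⟩ := Finset.mem_image.mp h
    exact main a a ha ha le_rfl
  · obtain ⟨p, hp, rfl⟩ := Finset.mem_image.mp h
    have hp' := Finset.mem_filter.mp hp
    have hp2 := Finset.mem_product.mp hp'.1
    obtain ⟨a, ha, ha'⟩ := Finset.mem_image.mp hp2.1
    obtain ⟨b, hb, hb'⟩ := Finset.mem_image.mp hp2.2
    have h1 : p.1.1 = a := by rw [← ha']
    have h2 : p.2.2 = lam b + 1 := by rw [← hb']
    have h3 : p.2.1 = b := by rw [← hb']
    simp only [h1, h2]
    exact main a b ha hb (by have := hp'.2; omega)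
end
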